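/- Rank of the rest-state one-parameter D2Q9 Jacobian at the special gravity value: let h̄ > 0, e > 0, g = e²/(3h̄) and λ ∈ ℝ arbitrary. Let D be the 9×9 matrix with D_{0j} = (8+λ)/9 − (4+λ)gh̄/(3e²) for all j, D_{ij} = (1−λ)/18 + (1+λ)gh̄/(6e²) + (ξ_i·ξ_j)/(3e²) for 1 ≤ i ≤ 4, and D_{ij} = (λ−1)/36 + (2−λ)gh̄/(12e²) + (ξ_i·ξ_j)/(12e²) for 5 ≤ i ≤ 8. Then rank(D) = 3 and rank(D − I₉) = 6. -/

import Mathlib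

set_option maxHeartbeats 4000000


/-- Dot product on `ℝ × ℝ`. -/
def pdot (a b : ℝ × ℝ) : ℝ := a.1 * b.1 + a.2 * b.2

/-- The D2Q9 lattice velocities with lattice speed `e`. -/
def xi9 (e : ℝ) : Fin 9 → ℝ × ℝ :=
  ![(0, 0), (e, 0), (0, e), (-e, 0), (0, -e), (e, e), (-e, e), (-e, -e), (e, -e)]

/-- The Jacobian of the one-parameter D2Q9 equilibrium distribution at the
rest state `(h̄, 0)`. -/
noncomputable def D9 (g l e hb : ℝ) : Matrix (Fin 9) (Fin 9) ℝ :=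
  Matrix.of fun i j =>
    if i = 0 then (8 + l) / 9 - (4 + l) * g * hb / (3 * e ^ 2)
    else if (i : ℕ) ≤ 4 then
      (1 - l) / 18 + (1 + l) * g * hb / (6 * e ^ 2) + pdot (xi9 e i) (xi9 e j) / (3 * e ^ 2)
    else
      (l - 1) / 36 + (2 - l) * g * hb / (12 * e ^ 2) + pdot (xi9 e i) (xi9 e j) / (12 * e ^ 2)

/-! ### Integer-scaled data -/

def Mz : Matrix (Fin 9) (Fin 9) ℤ :=
  !![16, 16, 16, 16, 16, 16, 16, 16, 16;
     4, 16, 4, -8, 4, 16, -8, -8, 16;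
     4, 4, 16, 4, -8, 16, 16, -8, -8;
     4, -8, 4, 16, 4, -8, 16, 16, -8;
     4, 4, -8, 4, 16, -8, -8, 16, 16;
     1, 4, 4, -2, -2, 7, 1, -5, 1;
     1, -2, 4, 4, -2, 1, 7, 1, -5;
     1, -2, -2, 4, 4, -5, 1, 7, 1;
     1, 4, -2, -2, 4, 1, -5, 1, 7]

def Nz : Matrix (Fin 9) (Fin 9) ℤ :=
  !![-40, 32, 32, 32, 32, 32, 32, 32, 32;
     8, -40, 8, -16, 8, 32, -16, -16, 32;
     8, 8, -40, 8, -16, 32, 32, -16, -16;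
     8, -16, 8, -40, 8, -16, 32, 32, -16;
     8, 8, -16, 8, -40, -16, -16, 32, 32;
     2, 8, 8, -4, -4, -58, 2, -10, 2;
     2, -4, 8, 8, -4, 2, -58, 2, -10;
     2, -4, -4, 8, 8, -10, 2, -58, 2;
     2, 8, -4, -4, 8, 2, -10, 2, -58]

def A3z : Matrix (Fin 9) (Fin 3) ℤ :=
  !![16, 0, 0;
     4, 12, 0;
     4, 0, 12;
     4, -12, 0;
     4, 0, -12;
     1, 3, 3;
     1, -3, 3;
     1, -3, -3;
     1, 3, -3]

def B3z : Matrix (Fin 3) (Fin 9) ℤ :=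
  !![1, 1, 1, 1, 1, 1, 1, 1, 1;
     0, 1, 0, -1, 0, 1, -1, -1, 1;
     0, 0, 1, 0, -1, 1, 1, -1, -1]

def A6z : Matrix (Fin 9) (Fin 6) ℤ :=
  !![2, 0, 0, 0, 0, 0;
     0, 2, 0, 0, 0, 0;
     0, 0, 2, 0, 0, 0;
     0, 0, 0, 2, 0, 0;
     0, 0, 0, 0, 2, 0;
     0, 0, 0, 0, 0, 2;
     -1, -1, -2, -1, 0, -2;
     0, 1, 1, -1, -1, 2;
     -1, -2, -1, 0, -1, -2]

def B6z : Matrix (Fin 6) (Fin 9) ℤ :=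
  !![-20, 16, 16, 16, 16, 16, 16, 16, 16;
     4, -20, 4, -8, 4, 16, -8, -8, 16;
     4, 4, -20, 4, -8, 16, 16, -8, -8;
     4, -8, 4, -20, 4, -8, 16, 16, -8;
     4, 4, -8, 4, -20, -8, -8, 16, 16;
     1, 4, 4, -2, -2, -29, 1, -5, 1]

def S3z : Matrix (Fin 3) (Fin 3) ℤ :=
  !![16, 16, 16;
     4, 16, 4;
     4, 4, 16]

def S6z : Matrix (Fin 6) (Fin 6) ℤ :=
  !![-40, 32, 32, 32, 32, 32;
     8, -40, 8, -16, 8, 32;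
     8, 8, -40, 8, -16, 32;
     8, -16, 8, -40, 8, -16;
     8, 8, -16, 8, -40, -16;
     2, 8, 8, -4, -4, -58]

def U3z : Matrix (Fin 3) (Fin 3) ℤ :=
  !![5, -4, -4;
     -1, 4, 0;
     -1, 0, 4]

def U6z : Matrix (Fin 6) (Fin 6) ℤ :=
  !![-9, -12, -12, -4, -4, -16;
     -3, -7, -5, 0, -1, -8;
     -3, -5, -7, -1, 0, -8;
     -1, 0, -1, -3, -1, 0;
     -1, -1, 0, -1, -3, 0;
     -1, -2, -2, 0, 0, -4]

def P3z : Matrix (Fin 3) (Fin 9) ℤ :=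
  !![1, 0, 0, 0, 0, 0, 0, 0, 0;
     0, 1, 0, 0, 0, 0, 0, 0, 0;
     0, 0, 1, 0, 0, 0, 0, 0, 0]

def Q3z : Matrix (Fin 9) (Fin 3) ℤ :=
  !![1, 0, 0;
     0, 1, 0;
     0, 0, 1;
     0, 0, 0;
     0, 0, 0;
     0, 0, 0;
     0, 0, 0;
     0, 0, 0;
     0, 0, 0]

def P6z : Matrix (Fin 6) (Fin 9) ℤ :=
  !![1, 0, 0, 0, 0, 0, 0, 0, 0;
     0, 1, 0, 0, 0, 0, 0, 0, 0;
     0, 0, 1, 0, 0, 0, 0, 0, 0;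
     0, 0, 0, 1, 0, 0, 0, 0, 0;
     0, 0, 0, 0, 1, 0, 0, 0, 0;
     0, 0, 0, 0, 0, 1, 0, 0, 0]

def Q6z : Matrix (Fin 9) (Fin 6) ℤ :=
  !![1, 0, 0, 0, 0, 0;
     0, 1, 0, 0, 0, 0;
     0, 0, 1, 0, 0, 0;
     0, 0, 0, 1, 0, 0;
     0, 0, 0, 0, 1, 0;
     0, 0, 0, 0, 0, 1;
     0, 0, 0, 0, 0, 0;
     0, 0, 0, 0, 0, 0;
     0, 0, 0, 0, 0, 0]

/-! ### Integer identities, proved by `decide` -/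

lemma zfact3 : Mz = A3z * B3z := by decide
lemma zfact6 : Nz = A6z * B6z := by decide
lemma zsub3 : P3z * (Mz * Q3z) = S3z := by decide
lemma zsub6 : P6z * (Nz * Q6z) = S6z := by decide
lemma zU3 : S3z * U3z = Matrix.diagonal (fun _ => 48) := by decide
lemma zU6 : S6z * U6z = Matrix.diagonal (fun _ => 72) := by decide
lemma zN : Nz = Matrix.diagonal (fun _ => 2) * Mz - Matrix.diagonal (fun _ => 72) := by decide

/-! ### Transfer to ℝ -/

noncomputable def zr {m n : Type*} (A : Matrix m n ℤ) : Matrix m n ℝ :=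
  A.map (Int.cast : ℤ → ℝ)

lemma zr_mul {m n o : Type*} [Fintype n] (A : Matrix m n ℤ) (B : Matrix n o ℤ) :
    zr (A * B) = zr A * zr B :=
  Matrix.map_mul (f := Int.castRingHom ℝ)

lemma zr_diag (n : Type*) [DecidableEq n] (d : ℤ) :
    zr (Matrix.diagonal (fun _ : n => d)) = Matrix.diagonal (fun _ : n => (d : ℝ)) :=
  Matrix.diagonal_map (by norm_num)

/-- The real rest-state Jacobian at the special gravity value. -/
noncomputable def M9 : Matrix (Fin 9) (Fin 9) ℝ := (36 : ℝ)⁻¹ • zr Mz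

lemma isUnit_S3 : IsUnit (zr S3z) := by
  have h48 : zr S3z * zr U3z = Matrix.diagonal (fun _ : Fin 3 => (48 : ℝ)) := by
    rw [← zr_mul, zU3, zr_diag]; norm_num
  have hd : (zr S3z).det * (zr U3z).det = 48 ^ 3 := by
    rw [← Matrix.det_mul, h48, Matrix.det_diagonal]
    norm_num
  rw [Matrix.isUnit_iff_isUnit_det, isUnit_iff_ne_zero]
  intro h
  rw [h, zero_mul] at hd
  norm_num at hd

lemma isUnit_S6 : IsUnit (zr S6z) := by
  have h72 : zr S6z * zr U6z = Matrix.diagonal (fun _ : Fin 6 => (72 : ℝ)) := by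
    rw [← zr_mul, zU6, zr_diag]; norm_num
  have hd : (zr S6z).det * (zr U6z).det = 72 ^ 6 := by
    rw [← Matrix.det_mul, h72, Matrix.det_diagonal]
    norm_num
  rw [Matrix.isUnit_iff_isUnit_det, isUnit_iff_ne_zero]
  intro h
  rw [h, zero_mul] at hd
  norm_num at hd

lemma rank_S3 : (zr S3z).rank = 3 := by
  rw [Matrix.rank_of_isUnit _ isUnit_S3]; simp

lemma rank_S6 : (zr S6z).rank = 6 := by
  rw [Matrix.rank_of_isUnit _ isUnit_S6]; simp

lemma rank_M9 : M9.rank = 3 := by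
  apply le_antisymm
  · have h : M9 = ((36 : ℝ)⁻¹ • zr A3z) * zr B3z := by
      rw [Matrix.smul_mul, ← zr_mul, ← zfact3, M9]
    rw [h]
    exact le_trans (Matrix.rank_mul_le_right _ _)
      (le_trans (Matrix.rank_le_card_height _) (by simp))
  · have h : ((36 : ℝ) • zr P3z) * (M9 * zr Q3z) = zr S3z := by
      simp only [M9, Matrix.smul_mul, Matrix.mul_smul, smul_smul, ← zr_mul, zsub3]
      norm_num
    calc (3 : ℕ) = (zr S3z).rank := rank_S3.symm
      _ = (((36 : ℝ) • zr P3z) * (M9 * zr Q3z)).rank := by rw [h]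
      _ ≤ (M9 * zr Q3z).rank := Matrix.rank_mul_le_right _ _
      _ ≤ M9.rank := Matrix.rank_mul_le_left _ _

lemma M9_sub_one : M9 - 1 = (72 : ℝ)⁻¹ • zr Nz := by
  ext i j
  fin_cases i <;> fin_cases j <;>
    norm_num [M9, zr, Mz, Nz, Matrix.smul_apply, Matrix.map_apply, Matrix.sub_apply,
      Matrix.one_apply, Fin.ext_iff]

lemma rank_N9 : (M9 - 1).rank = 6 := by
  rw [M9_sub_one]
  apply le_antisymm
  · have h : (72 : ℝ)⁻¹ • zr Nz = ((72 : ℝ)⁻¹ • zr A6z) * zr B6z := by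
      rw [Matrix.smul_mul, ← zr_mul, ← zfact6]
    rw [h]
    exact le_trans (Matrix.rank_mul_le_right _ _)
      (le_trans (Matrix.rank_le_card_height _) (by simp))
  · have h : ((72 : ℝ) • zr P6z) * (((72 : ℝ)⁻¹ • zr Nz) * zr Q6z) = zr S6z := by
      simp only [Matrix.smul_mul, Matrix.mul_smul, smul_smul, ← zr_mul, zsub6]
      norm_num
    calc (6 : ℕ) = (zr S6z).rank := rank_S6.symm
      _ = (((72 : ℝ) • zr P6z) * (((72 : ℝ)⁻¹ • zr Nz) * zr Q6z)).rank := by rw [h]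
      _ ≤ (((72 : ℝ)⁻¹ • zr Nz) * zr Q6z).rank := Matrix.rank_mul_le_right _ _
      _ ≤ ((72 : ℝ)⁻¹ • zr Nz).rank := Matrix.rank_mul_le_left _ _

def vxz : Fin 9 → ℤ := ![0,1,0,-1,0,1,-1,-1,1]
def vyz : Fin 9 → ℤ := ![0,0,1,0,-1,1,1,-1,-1]
noncomputable def vx : Fin 9 → ℝ := fun j => (vxz j : ℝ)
noncomputable def vy : Fin 9 → ℝ := fun j => (vyz j : ℝ)

lemma hxi (e : ℝ) (j : Fin 9) : xi9 e j = (e * vx j, e * vy j) := by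
  fin_cases j <;> norm_num [xi9, vx, vy, vxz, vyz, Matrix.cons_val_succ]

lemma hB0 : ∀ j, B3z 0 j = 1 := by decide
lemma hB1 : ∀ j, B3z 1 j = vxz j := by decide
lemma hB2 : ∀ j, B3z 2 j = vyz j := by decide

lemma hM9 (i j : Fin 9) : M9 i j =
    36⁻¹ * (((A3z i 0 : ℤ) : ℝ) + ((A3z i 1 : ℤ) : ℝ) * vx j + ((A3z i 2 : ℤ) : ℝ) * vy j) := by
  have h : zr Mz = zr A3z * zr B3z := by rw [← zr_mul, ← zfact3]
  have h' := congrFun (congrFun h i) j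
  simp [Matrix.mul_apply, Fin.sum_univ_three, zr, Matrix.map_apply, hB0, hB1, hB2] at h'
  simp [M9, zr, Matrix.map_apply, Matrix.smul_apply, h', vx, vy]

lemma hDeq (hb e g l : ℝ) (hhb : 0 < hb) (he : 0 < e)
    (hg : g = e ^ 2 / (3 * hb)) : D9 g l e hb = M9 := by
  have hb0 : hb ≠ 0 := hhb.ne'
  have he0 : e ≠ 0 := he.ne'
  subst hg
  ext i j
  rw [hM9]
  fin_cases i <;>
    (norm_num [D9, hxi, pdot, A3z, vx, vy, vxz, vyz, Matrix.cons_val_two, Matrix.cons_val_succ];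
     field_simp; ring)

theorem d2q9_lambda_rank_special_gravity (hb e g l : ℝ) (hhb : 0 < hb) (he : 0 < e)
    (hg : g = e ^ 2 / (3 * hb)) :
    (D9 g l e hb).rank = 3 ∧ (D9 g l e hb - 1).rank = 6 := by
  rw [hDeq hb e g l hhb he hg]
  exact ⟨rank_M9, rank_N9⟩
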